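/- arXiv:2411.11338 — 4 statements merged into one kernel-verified Lean document; each statement's English description precedes it below -/
import Mathlib

section
/- Let X ⊆ Y be subsets of ℝⁿ with X nonempty, let c ∈ ℝⁿ, let π, π' ∈ ℝᵐ, let A be an m×n real matrix, and let μ, μ' ∈ ℝ. Suppose the infimum of (c - π'ᵀA)·x over x ∈ X is attained with value c̄' and the infimum of (c - πᵀA)·x over x ∈ X is attained with value c̄_X, and the infimum of ((π' - π)ᵀA)·x over x ∈ Y is attained with value d. Then c̄_X - μ ≥ (c̄' - μ') + μ' - μ + d. -/
/-- Proposition 1 (pricing filtering bound).  With duals (π, μ) at the current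
iteration and (π', μ') at a previous iteration, if the minima defining the
previous reduced cost `c̄'`, the current minimum `c̄X` over `X`, and the
correction term `d` over the relaxation `Y ⊇ X` are attained, then
`c̄X - μ ≥ (c̄' - μ') + μ' - μ + d`. -/
theorem stmt_0 {n m : ℕ} (X Y : Set (Fin n → ℝ)) (hXY : X ⊆ Y) (hX : X.Nonempty)
    (c : Fin n → ℝ) (π π' : Fin m → ℝ) (A : Matrix (Fin m) (Fin n) ℝ) (μ μ' : ℝ)
    (cbar' cbarX d : ℝ)
    (h1 : IsLeast {r : ℝ | ∃ x ∈ X, r = ∑ j, (c j - ∑ i, π' i * A i j) * x j} cbar')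
    (h2 : IsLeast {r : ℝ | ∃ x ∈ X, r = ∑ j, (c j - ∑ i, π i * A i j) * x j} cbarX)
    (h3 : IsLeast {r : ℝ | ∃ x ∈ Y, r = ∑ j, (∑ i, (π' i - π i) * A i j) * x j} d) :
    cbarX - μ ≥ (cbar' - μ') + μ' - μ + d := by
  obtain ⟨⟨x, hxX, hxval⟩, _⟩ := h2
  have hc : cbar' ≤ ∑ j, (c j - ∑ i, π' i * A i j) * x j := h1.2 ⟨x, hxX, rfl⟩
  have hd : d ≤ ∑ j, (∑ i, (π' i - π i) * A i j) * x j := h3.2 ⟨x, hXY hxX, rfl⟩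
  have key : (∑ j, (c j - ∑ i, π' i * A i j) * x j)
      + ∑ j, (∑ i, (π' i - π i) * A i j) * x j
      = ∑ j, (c j - ∑ i, π i * A i j) * x j := by
    rw [← Finset.sum_add_distrib]
    congr 1; funext j
    rw [← add_mul]
    simp only [sub_mul, Finset.sum_sub_distrib]
    ring
  have : cbar' + d ≤ cbarX := by rw [hxval, ← key]; linarith
  linarith
end

section
/- Let X ⊆ Y ⊆ ℝⁿ with X nonempty and finite, c ∈ ℝⁿ, A an m×n real matrix, π, π' ∈ ℝᵐ, μ, μ' ∈ ℝ. Let c̄' = min over x ∈ X of ((c - π'ᵀA)·x - μ') and let d be a lower bound on ((π'-π)ᵀA)·y for all y ∈ Y. If c̄' + μ' - μ + d ≥ 0, then for every x ∈ X, (c - πᵀA)·x - μ ≥ 0 (i.e., no point of X has a negative reduced cost at the current iteration). -/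
/-- Correctness of the exact pricing filter: if the lower bound
`c̄' + μ' - μ + d` computed from a previous iteration is nonnegative, then no
point of `X` has negative reduced cost at the current iteration. -/
theorem stmt_1 {n m : ℕ} (X : Finset (Fin n → ℝ)) (Y : Set (Fin n → ℝ))
    (hX : X.Nonempty) (hXY : (X : Set (Fin n → ℝ)) ⊆ Y)
    (c : Fin n → ℝ) (A : Matrix (Fin m) (Fin n) ℝ) (π π' : Fin m → ℝ) (μ μ' : ℝ)
    (cbar' d : ℝ)
    (hc' : cbar' = X.inf' hX (fun x => (∑ j, (c j - ∑ i, π' i * A i j) * x j) - μ'))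
    (hd : ∀ y ∈ Y, d ≤ ∑ j, (∑ i, (π' i - π i) * A i j) * y j)
    (hfilter : cbar' + μ' - μ + d ≥ 0) :
    ∀ x ∈ X, (∑ j, (c j - ∑ i, π i * A i j) * x j) - μ ≥ 0 := by
  intro x hx
  have h1 : cbar' ≤ (∑ j, (c j - ∑ i, π' i * A i j) * x j) - μ' := by
    rw [hc']; exact Finset.inf'_le _ hx
  have h2 : d ≤ ∑ j, (∑ i, (π' i - π i) * A i j) * x j := hd x (hXY hx)
  have key : (∑ j, (c j - ∑ i, π i * A i j) * x j) =
      ∑ j, ((c j - ∑ i, π' i * A i j) * x j + (∑ i, (π' i - π i) * A i j) * x j) := by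
    apply Finset.sum_congr rfl; intro j _
    rw [← add_mul]
    congr 1
    simp [Finset.sum_sub_distrib, sub_mul]
  rw [Finset.sum_add_distrib] at key
  linarith
end

section
/- Let v ∈ ℝᵐ, and for each k let Xᵏ ⊆ ℝⁿ be finite nonempty with minimum reduced costs c̄ᵏ = min_{x∈Xᵏ}((cᵏ - πᵀAᵏ)·x - μ_k). Suppose (π, μ) is a feasible dual solution of the restricted master problem with objective value z_RMP (equal to the RMP optimum by LP duality). Then z_RMP + ∑_{k∈K} c̄ᵏ is a lower bound on the optimal value of the full Dantzig-Wolfe master problem. -/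
/-!
Aggregate each block of the master solution into the convex combination `yₖ = ∑ₓ λₖₓ • x`.
The minimum reduced cost `c̄ᵏ` is at most the (affine) reduced cost at `yₖ`, and for any
`π ≥ 0` the Lagrangian `π ⬝ b + ∑ₖ (cᵏ - πᵀAᵏ) ⬝ yₖ` is at most the primal cost `∑ₖ cᵏ ⬝ yₖ`
whenever `∑ₖ Aᵏ yₖ ≥ b`. Adding `∑ₖ μₖ` to both bounds gives the claim.
-/

open Finset Matrix

theorem Finset.inf'_le_sum_mul {ι R : Type*} [Semiring R] [LinearOrder R] [IsOrderedRing R]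
    {s : Finset ι} (hs : s.Nonempty) (f w : ι → R) (hw : ∀ i ∈ s, 0 ≤ w i)
    (hw₁ : ∑ i ∈ s, w i = 1) :
    s.inf' hs f ≤ ∑ i ∈ s, f i * w i :=
  calc s.inf' hs f = ∑ i ∈ s, s.inf' hs f * w i := by rw [← mul_sum, hw₁, mul_one]
    _ ≤ ∑ i ∈ s, f i * w i :=
      sum_le_sum fun i hi => mul_le_mul_of_nonneg_right (inf'_le f hi) (hw i hi)

theorem Matrix.sum_dotProduct_mul {ι m R : Type*} [Fintype m] [CommSemiring R]
    (s : Finset ι) (u : m → R) (v : ι → m → R) (w : ι → R) :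
    ∑ i ∈ s, (u ⬝ᵥ v i) * w i = u ⬝ᵥ ∑ i ∈ s, w i • v i := by
  simp only [dotProduct_sum, dotProduct_smul, smul_eq_mul, mul_comm]

theorem inf'_reducedCost_le {ι m R : Type*} [Fintype m] [CommRing R] [LinearOrder R]
    [IsOrderedRing R] {s : Finset ι} (hs : s.Nonempty) (r : m → R) (μ : R)
    (x : ι → m → R) (w : ι → R) (hw : ∀ i ∈ s, 0 ≤ w i) (hw₁ : ∑ i ∈ s, w i = 1) :
    s.inf' hs (fun i => r ⬝ᵥ x i - μ) ≤ r ⬝ᵥ ∑ i ∈ s, w i • x i - μ :=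
  calc s.inf' hs (fun i => r ⬝ᵥ x i - μ) ≤ ∑ i ∈ s, (r ⬝ᵥ x i - μ) * w i :=
        inf'_le_sum_mul hs _ w hw hw₁
    _ = r ⬝ᵥ ∑ i ∈ s, w i • x i - μ := by
        simp only [sub_mul, sum_sub_distrib, sum_dotProduct_mul, ← mul_sum, hw₁, mul_one]

theorem lagrangian_le_of_cover {K l m R : Type*} [Fintype K] [Fintype l] [Fintype m]
    [CommRing R] [PartialOrder R] [IsOrderedRing R]
    (c : K → m → R) (A : K → Matrix l m R) (b π : l → R) (hπ : 0 ≤ π)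
    (y : K → m → R) (hcover : b ≤ ∑ k, A k *ᵥ y k) :
    b ⬝ᵥ π + ∑ k, (c k - π ᵥ* A k) ⬝ᵥ y k ≤ ∑ k, c k ⬝ᵥ y k := by
  have hsplit : ∑ k, (c k - π ᵥ* A k) ⬝ᵥ y k = ∑ k, c k ⬝ᵥ y k - π ⬝ᵥ ∑ k, A k *ᵥ y k := by
    simp only [sub_dotProduct, sum_sub_distrib, ← dotProduct_mulVec, dotProduct_sum]
  have hweak : b ⬝ᵥ π ≤ π ⬝ᵥ ∑ k, A k *ᵥ y k := by
    rw [dotProduct_comm]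
    exact dotProduct_le_dotProduct_of_nonneg_left hcover hπ
  calc b ⬝ᵥ π + ∑ k, (c k - π ᵥ* A k) ⬝ᵥ y k
      ≤ π ⬝ᵥ ∑ k, A k *ᵥ y k + (∑ k, c k ⬝ᵥ y k - π ⬝ᵥ ∑ k, A k *ᵥ y k) := by
        rw [hsplit]; gcongr
    _ = ∑ k, c k ⬝ᵥ y k := add_sub_cancel _ _

theorem stmt_9_general {m n : ℕ} {K : Type*} [Fintype K]
    (c : K → Fin n → ℝ) (A : K → Matrix (Fin m) (Fin n) ℝ) (b : Fin m → ℝ)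
    (X : K → Finset (Fin n → ℝ)) (hXne : ∀ k, (X k).Nonempty)
    (π : Fin m → ℝ) (μ : K → ℝ)
    (hπ : ∀ i, 0 ≤ π i)
    (zRMP : ℝ) (hz : zRMP = (∑ i, b i * π i) + ∑ k, μ k)
    (cbar : K → ℝ)
    (hcbar : ∀ k, cbar k =
      (X k).inf' (hXne k) (fun x => (∑ j, (c k j - ∑ i, π i * A k i j) * x j) - μ k)) :
    ∀ lam : K → (Fin n → ℝ) → ℝ,
      (∀ k x, 0 ≤ lam k x) →
      (∀ i : Fin m, ∑ k, ∑ x ∈ X k, (∑ j, A k i j * x j) * lam k x ≥ b i) →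
      (∀ k, ∑ x ∈ X k, lam k x = 1) →
      zRMP + ∑ k, cbar k ≤
        ∑ k, ∑ x ∈ X k, (∑ j, c k j * x j) * lam k x := by
  intro lam hlam hcov hconv
  set y : K → Fin n → ℝ := fun k => ∑ x ∈ X k, lam k x • x
  have hcover : b ≤ ∑ k, A k *ᵥ y k := fun i => by
    have hrow : ∀ k, (A k *ᵥ y k) i = ∑ x ∈ X k, (∑ j, A k i j * x j) * lam k x := fun k =>
      (sum_dotProduct_mul (X k) (A k i) id (lam k)).symm
    simpa only [Finset.sum_apply, hrow] using hcov i
  have hred : ∀ k, cbar k ≤ (c k - π ᵥ* A k) ⬝ᵥ y k - μ k := fun k =>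
    (hcbar k).trans_le <|
      inf'_reducedCost_le (hXne k) _ _ id (lam k) (fun x _ => hlam k x) (hconv k)
  calc zRMP + ∑ k, cbar k ≤ b ⬝ᵥ π + ∑ k, (c k - π ᵥ* A k) ⬝ᵥ y k := by
        have hsum := sum_le_sum fun k (_ : k ∈ univ) => hred k
        rw [sum_sub_distrib] at hsum
        rw [hz, ← dotProduct]
        linarith
    _ ≤ ∑ k, c k ⬝ᵥ y k := lagrangian_le_of_cover c A b π hπ y hcover
    _ = ∑ k, ∑ x ∈ X k, (∑ j, c k j * x j) * lam k x := by
        simp only [y, ← sum_dotProduct_mul]; rfl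

/-- The Lagrangian (Dantzig–Wolfe) lower bound: if `(π, μ)` is a feasible dual
solution of the restricted master problem (π ≥ 0 and nonnegative reduced costs
on the columns of the RMP) with dual objective value `z_RMP = b·π + ∑ μ_k`,
and `c̄ᵏ` is the minimum reduced cost of subproblem `k`, then
`z_RMP + ∑_k c̄ᵏ` bounds the optimal value of the full master problem from
below, i.e. every primal feasible `λ` of the full master has objective at
least this value. -/
theorem stmt_9 {m n : ℕ} {K : Type*} [Fintype K]
    (c : K → Fin n → ℝ) (A : K → Matrix (Fin m) (Fin n) ℝ) (b : Fin m → ℝ)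
    (X : K → Finset (Fin n → ℝ)) (hXne : ∀ k, (X k).Nonempty)
    (R : K → Finset (Fin n → ℝ)) -- columns currently in the RMP
    (hRX : ∀ k, R k ⊆ X k)
    (π : Fin m → ℝ) (μ : K → ℝ)
    (hπ : ∀ i, 0 ≤ π i)
    (hdualfeas : ∀ k, ∀ χ ∈ R k, (∑ j, (c k j - ∑ i, π i * A k i j) * χ j) - μ k ≥ 0)
    (zRMP : ℝ) (hz : zRMP = (∑ i, b i * π i) + ∑ k, μ k)
    (cbar : K → ℝ)
    (hcbar : ∀ k, cbar k =
      (X k).inf' (hXne k) (fun x => (∑ j, (c k j - ∑ i, π i * A k i j) * x j) - μ k)) :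
    ∀ lam : K → (Fin n → ℝ) → ℝ,
      (∀ k x, 0 ≤ lam k x) →
      (∀ i : Fin m, ∑ k, ∑ x ∈ X k, (∑ j, A k i j * x j) * lam k x ≥ b i) →
      (∀ k, ∑ x ∈ X k, lam k x = 1) →
      zRMP + ∑ k, cbar k ≤
        ∑ k, ∑ x ∈ X k, (∑ j, c k j * x j) * lam k x :=
  stmt_9_general c A b X hXne π μ hπ zRMP hz cbar hcbar
end

section
/- Let X ⊆ ℝⁿ be finite nonempty, and let ℓ₁ < ℓ₂ < t be iterations with dual data (πˡ¹, μˡ¹), (πˡ², μˡ²), (πᵗ, μᵗ) and exact minimum reduced costs c̄ˡ¹, c̄ˡ². Define LB_j = c̄ˡʲ + μˡʲ - μᵗ + min_{x∈Y}((πˡʲ - πᵗ)ᵀA)·x for j = 1, 2, where X ⊆ Y. Then max(LB₁, LB₂) is a valid lower bound on c̄ᵗ = min_{x∈X}((c - πᵗᵀA)·x - μᵗ); in particular, if either LB₁ ≥ 0 or LB₂ ≥ 0, then c̄ᵗ ≥ 0. -/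
lemma key_13 {n m : ℕ} (X : Finset (Fin n → ℝ)) (hX : X.Nonempty)
    (Y : Set (Fin n → ℝ)) (hXY : (X : Set (Fin n → ℝ)) ⊆ Y)
    (c : Fin n → ℝ) (A : Matrix (Fin m) (Fin n) ℝ)
    (π πt : Fin m → ℝ) (μ μt d : ℝ)
    (hd : IsLeast {r : ℝ | ∃ x ∈ Y, r = ∑ j, (∑ i, (π i - πt i) * A i j) * x j} d) :
    X.inf' hX (fun x => (∑ j, (c j - ∑ i, π i * A i j) * x j) - μ) + μ - μt + d ≤
    X.inf' hX (fun x => (∑ j, (c j - ∑ i, πt i * A i j) * x j) - μt) := by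
  apply Finset.le_inf'
  intro x hx
  have h1 : X.inf' hX (fun x => (∑ j, (c j - ∑ i, π i * A i j) * x j) - μ)
      ≤ (∑ j, (c j - ∑ i, π i * A i j) * x j) - μ := Finset.inf'_le _ hx
  have h2 : d ≤ ∑ j, (∑ i, (π i - πt i) * A i j) * x j :=
    hd.2 ⟨x, hXY hx, rfl⟩
  have heq : (∑ j, (c j - ∑ i, πt i * A i j) * x j) =
      (∑ j, (c j - ∑ i, π i * A i j) * x j) + ∑ j, (∑ i, (π i - πt i) * A i j) * x j := by
    rw [← Finset.sum_add_distrib]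
    congr 1; ext j
    have : (∑ i, (π i - πt i) * A i j) = (∑ i, π i * A i j) - ∑ i, πt i * A i j := by
      rw [← Finset.sum_sub_distrib]; congr 1; ext i; ring
    rw [this]; ring
  linarith

/-- Validity of the `all` filtering strategy: the bounds derived from two
previous exactly-solved iterations are simultaneously valid, so their maximum
is a valid lower bound on the current minimum reduced cost; in particular if
either bound is nonnegative, the current minimum reduced cost is
nonnegative. -/
theorem stmt_13 {n m : ℕ} (X : Finset (Fin n → ℝ)) (hX : X.Nonempty)
    (Y : Set (Fin n → ℝ)) (hXY : (X : Set (Fin n → ℝ)) ⊆ Y)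
    (c : Fin n → ℝ) (A : Matrix (Fin m) (Fin n) ℝ)
    (π1 π2 πt : Fin m → ℝ) (μ1 μ2 μt : ℝ)
    (cbar1 cbar2 d1 d2 LB1 LB2 cbart : ℝ)
    (hc1 : cbar1 = X.inf' hX (fun x => (∑ j, (c j - ∑ i, π1 i * A i j) * x j) - μ1))
    (hc2 : cbar2 = X.inf' hX (fun x => (∑ j, (c j - ∑ i, π2 i * A i j) * x j) - μ2))
    (hd1 : IsLeast {r : ℝ | ∃ x ∈ Y, r = ∑ j, (∑ i, (π1 i - πt i) * A i j) * x j} d1)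
    (hd2 : IsLeast {r : ℝ | ∃ x ∈ Y, r = ∑ j, (∑ i, (π2 i - πt i) * A i j) * x j} d2)
    (hLB1 : LB1 = cbar1 + μ1 - μt + d1)
    (hLB2 : LB2 = cbar2 + μ2 - μt + d2)
    (hct : cbart = X.inf' hX (fun x => (∑ j, (c j - ∑ i, πt i * A i j) * x j) - μt)) :
    max LB1 LB2 ≤ cbart ∧ ((0 ≤ LB1 ∨ 0 ≤ LB2) → 0 ≤ cbart) := by
  have h1 := key_13 X hX Y hXY c A π1 πt μ1 μt d1 hd1
  have h2 := key_13 X hX Y hXY c A π2 πt μ2 μt d2 hd2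
  rw [← hc1, ← hct, ← hLB1] at h1
  rw [← hc2, ← hct, ← hLB2] at h2
  exact ⟨max_le h1 h2, fun h => h.elim (fun h0 => le_trans h0 h1) (fun h0 => le_trans h0 h2)⟩
end
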